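/- arXiv:1408.4654 — 7 statements merged into one kernel-verified Lean document; each statement's English description precedes it below -/
import Mathlib

section
/- For every real number p ≥ 3 and every real t with |t| ≤ 1, one has |1+t|^p ≥ 1 + |t|^p + p·|t|^(p-2)·t + p·t. -/
/-!
On each side of `t = 0` the difference of the two sides vanishes at `t = 0` and is monotone in
`|t|`, by the sign of its derivative. For `t ≥ 0` we prove the homogeneous form
`(x + y) ^ p ≥ x ^ p + y ^ p + p x ^ (p - 1) y + p x y ^ (p - 1)`; differentiating in `y` reduces
it to `(x + y) ^ q ≥ x ^ q + q x ^ (q - 1) y + y ^ q` with `q = p - 1 ≥ 2`, and differentiating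
once more to the superadditivity of `x ↦ x ^ (q - 1)`. For `t = -s ≤ 0` the derivative is
nonnegative by the crude bounds `(1 - s) ^ (p - 1) ≤ 1` and `s ^ (p - 1) ≤ s ^ (p - 2)`
on `[0, 1]`.
-/

open Real Set

lemma le_of_hasDerivAt_nonneg {f f' : ℝ → ℝ} {a b : ℝ} (hab : a ≤ b)
    (hf : ContinuousOn f (Icc a b)) (hf' : ∀ x ∈ Ioo a b, HasDerivAt f (f' x) x)
    (hf'₀ : ∀ x ∈ Ioo a b, 0 ≤ f' x) : f a ≤ f b := by
  refine monotoneOn_of_hasDerivWithinAt_nonneg (convex_Icc a b) hf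
    (fun x hx ↦ (hf' x ?_).hasDerivWithinAt) (fun x hx ↦ hf'₀ x ?_)
    (left_mem_Icc.2 hab) (right_mem_Icc.2 hab) hab <;> rwa [interior_Icc] at hx

lemma le_add_rpow_of_two_le {q x y : ℝ} (hq : 2 ≤ q) (hx : 0 ≤ x) (hy : 0 ≤ y) :
    x ^ q + q * x ^ (q - 1) * y + y ^ q ≤ (x + y) ^ q := by
  have key := le_of_hasDerivAt_nonneg
    (f := fun z ↦ (x + z) ^ q - x ^ q - q * x ^ (q - 1) * z - z ^ q)
    (f' := fun z ↦ q * ((x + z) ^ (q - 1) - x ^ (q - 1) - z ^ (q - 1))) hy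
    (by fun_prop (disch := linarith)) (fun z hz ↦ ?_) (fun z hz ↦ ?_)
  · simp only [add_zero, mul_zero, sub_self, zero_rpow (by linarith : q ≠ 0)] at key
    linarith
  · have h₁ := ((hasDerivAt_id' z).const_add x).rpow_const (p := q) (Or.inr (by linarith))
    have h₂ := hasDerivAt_rpow_const (x := z) (p := q) (Or.inr (by linarith))
    refine (((h₁.sub_const (x ^ q)).sub ((hasDerivAt_id' z).const_mul (q * x ^ (q - 1)))).sub
      h₂).congr_deriv ?_
    ring
  · exact mul_nonneg (by linarith) <| sub_nonneg.2 <| by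
      linarith [add_rpow_le_rpow_add hx hz.1.le (by linarith : 1 ≤ q - 1)]

lemma le_add_rpow_of_three_le {p x y : ℝ} (hp : 3 ≤ p) (hx : 0 ≤ x) (hy : 0 ≤ y) :
    x ^ p + y ^ p + p * x ^ (p - 1) * y + p * x * y ^ (p - 1) ≤ (x + y) ^ p := by
  have key := le_of_hasDerivAt_nonneg
    (f := fun z ↦ (x + z) ^ p - x ^ p - z ^ p - p * x ^ (p - 1) * z - p * x * z ^ (p - 1))
    (f' := fun z ↦ p * ((z + x) ^ (p - 1) - (z ^ (p - 1) + (p - 1) * z ^ (p - 1 - 1) * x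
      + x ^ (p - 1)))) hy
    (by fun_prop (disch := linarith)) (fun z hz ↦ ?_) (fun z hz ↦ ?_)
  · simp only [add_zero, mul_zero, sub_self, zero_rpow (by linarith : p ≠ 0),
      zero_rpow (by linarith : p - 1 ≠ 0)] at key
    linarith
  · have h₁ := ((hasDerivAt_id' z).const_add x).rpow_const (p := p) (Or.inr (by linarith))
    have h₂ := hasDerivAt_rpow_const (x := z) (p := p) (Or.inr (by linarith))
    have h₃ := hasDerivAt_rpow_const (x := z) (p := p - 1) (Or.inr (by linarith))
    refine ((((h₁.sub_const (x ^ p)).sub h₂).sub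
      ((hasDerivAt_id' z).const_mul (p * x ^ (p - 1)))).sub (h₃.const_mul (p * x))).congr_deriv ?_
    rw [add_comm z x]
    ring
  · exact mul_nonneg (by linarith) <| sub_nonneg.2 <|
      le_add_rpow_of_two_le (by linarith) hz.1.le hx

lemma le_one_sub_rpow_of_two_le {p s : ℝ} (hp : 2 ≤ p) (hs₀ : 0 ≤ s) (hs₁ : s ≤ 1) :
    1 + s ^ p - p * s ^ (p - 1) - p * s ≤ (1 - s) ^ p := by
  have key := le_of_hasDerivAt_nonneg
    (f := fun z ↦ (1 - z) ^ p - 1 - z ^ p + p * z ^ (p - 1) + p * z)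
    (f' := fun z ↦ p * (1 + (p - 1) * z ^ (p - 1 - 1) - (1 - z) ^ (p - 1) - z ^ (p - 1))) hs₀
    (by fun_prop (disch := linarith)) (fun z hz ↦ ?_) (fun z hz ↦ ?_)
  · simp only [sub_zero, mul_zero, add_zero, one_rpow, sub_self, zero_rpow (by linarith : p ≠ 0),
      zero_rpow (by linarith : p - 1 ≠ 0)] at key
    linarith
  · have h₁ := ((hasDerivAt_id' z).const_sub 1).rpow_const (p := p) (Or.inr (by linarith))
    have h₂ := hasDerivAt_rpow_const (x := z) (p := p) (Or.inr (by linarith))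
    have h₃ := hasDerivAt_rpow_const (x := z) (p := p - 1) (Or.inr (by linarith))
    refine (((((h₁.sub_const 1).sub h₂).add (h₃.const_mul p)).add
      ((hasDerivAt_id' z).const_mul p))).congr_deriv ?_
    ring
  · obtain ⟨hz₀, hz₁⟩ := hz
    have h₁ : (1 - z) ^ (p - 1) ≤ 1 := rpow_le_one (by linarith) (by linarith) (by linarith)
    have h₂ : z ^ (p - 1) ≤ z ^ (p - 1 - 1) :=
      rpow_le_rpow_of_exponent_ge hz₀ (by linarith) (by linarith)
    have h₃ : z ^ (p - 1 - 1) ≤ (p - 1) * z ^ (p - 1 - 1) :=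
      le_mul_of_one_le_left (rpow_nonneg hz₀.le _) (by linarith)
    exact mul_nonneg (by linarith) (by linarith)

theorem stmt0 (p t : ℝ) (hp : 3 ≤ p) (ht : |t| ≤ 1) :
    |1 + t| ^ p ≥ 1 + |t| ^ p + p * (Real.sign t * |t| ^ (p - 1)) + p * t := by
  rcases lt_trichotomy t 0 with hneg | rfl | hpos
  · have hle : -1 ≤ t := (abs_le.1 ht).1
    have h := le_one_sub_rpow_of_two_le (p := p) (by linarith) (neg_nonneg.2 hneg.le) (neg_le.1 hle)
    rw [sub_neg_eq_add] at h
    rw [abs_of_neg hneg, abs_of_nonneg (by linarith), sign_of_neg hneg]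
    linarith
  · simp [zero_rpow (by linarith : p ≠ 0)]
  · have h := le_add_rpow_of_three_le hp zero_le_one hpos.le
    simp only [one_rpow, mul_one] at h
    rw [abs_of_pos hpos, abs_of_pos (by linarith), sign_of_pos hpos]
    linarith
end

section
/- For every p in the open interval (1,3) there exists a real number t with |t| ≤ 1 such that |1+t|^p < 1 + |t|^p + p·|t|^(p-2)·t + p·t. -/
lemma two_rpow_lt (p : ℝ) (hp1 : 1 < p) (hp3 : p < 3) : (2:ℝ) ^ p < 2 + 2 * p := by
  have hkey := strictConvexOn_exp.2 (Set.mem_univ (Real.log 2)) (Set.mem_univ (3 * Real.log 2))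
    (by
      have : (0:ℝ) < Real.log 2 := Real.log_pos (by norm_num)
      nlinarith)
    (show (0:ℝ) < (3 - p)/2 by linarith) (show (0:ℝ) < (p - 1)/2 by linarith)
    (by ring)
  have h2 : Real.exp (Real.log 2) = 2 := Real.exp_log (by norm_num)
  have h8 : Real.exp (3 * Real.log 2) = 8 := by
    rw [show (3:ℝ) * Real.log 2 = Real.log 2 + Real.log 2 + Real.log 2 by ring,
      Real.exp_add, Real.exp_add, h2]; norm_num
  simp only [smul_eq_mul] at hkey
  have harg : (3 - p)/2 * Real.log 2 + (p - 1)/2 * (3 * Real.log 2) = p * Real.log 2 := by ring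
  rw [harg, h2, h8] at hkey
  rw [Real.rpow_def_of_pos (by norm_num : (0:ℝ) < 2) p, mul_comm]
  nlinarith
theorem stmt1 (p : ℝ) (hp1 : 1 < p) (hp3 : p < 3) :
    ∃ t : ℝ, |t| ≤ 1 ∧
      |1 + t| ^ p < 1 + |t| ^ p + p * (Real.sign t * |t| ^ (p - 1)) + p * t := by
  refine ⟨1, by norm_num, ?_⟩
  have h1 : |(1:ℝ)| = 1 := abs_one
  rw [Real.sign_one, h1]
  norm_num
  have := two_rpow_lt p hp1 hp3
  linarith
end

section
/- Let p ≥ 3 be a real number. For all real t with |t| ≤ 1 and all real θ with |θ| ≤ 1, one has (1 + t² + 2tθ)^(p/2) ≥ 1 + |t|^p + p·|t|^(p-2)·t·θ + p·t·θ. (Note 1 + t² + 2tθ ≥ 0 under these constraints.) -/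
/-!
Put `a = |t|` and `s = tθ`, so that `|s| ≤ a ≤ 1` and the base is `(1 + s)² + (a² - s²)`.
For `s ≥ 0`, the tangent line of `x ↦ x^(p/2)` at `(1 + s)²` and Bernoulli's inequality
for `(1 + s)^(p-2)` reduce the claim, after `a^p ≤ a³` and `a^(p-2) ≤ a`, to a polynomial
inequality.
For `s < 0`, superadditivity of `x ↦ x^(p/2)` splits the left side into `(1 + s)^p ≥ 1 + ps` and
`(a² - s²)^(p/2)`, which is bounded below by its tangent line at `a²`.
-/

open Real

namespace Real

lemma sq_rpow_div_two {x : ℝ} (hx : 0 ≤ x) (r : ℝ) : (x ^ 2) ^ (r / 2) = x ^ r := by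
  rw [← rpow_natCast_mul hx]
  norm_num [mul_div_cancel₀]

lemma rpow_add_mul_rpow_sub_one_mul_sub_le_rpow {x y r : ℝ} (hx : 0 < x) (hy : 0 ≤ y)
    (hr : 1 ≤ r) : x ^ r + r * x ^ (r - 1) * (y - x) ≤ y ^ r := by
  have hbern := one_add_mul_self_le_rpow_one_add
    (show -1 ≤ y / x - 1 by linarith [div_nonneg hy hx.le]) hr
  rw [add_sub_cancel, div_rpow hy hx.le, le_div_iff₀ (rpow_pos_of_pos hx r)] at hbern
  refine le_of_eq_of_le ?_ hbern
  rw [rpow_sub_one hx.ne']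
  field_simp

lemma sign_mul_abs_rpow (t r : ℝ) : sign t * |t| ^ r = |t| ^ (r - 1) * t := by
  rcases lt_trichotomy t 0 with ht | rfl | ht
  · rw [sign_of_neg ht, rpow_sub_one (abs_ne_zero.mpr ht.ne), abs_of_neg ht]
    field_simp [ht.ne]
  · simp
  · rw [sign_of_pos ht, abs_of_pos ht, rpow_sub_one ht.ne']
    field_simp

end Real

section KeyInequality

variable {p a s : ℝ}

lemma polynomial_lower_bound_of_nonneg (hp : 3 ≤ p) (hs : 0 ≤ s) (hsa : s ≤ a) (ha : a ≤ 1) :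
    1 + a ^ 3 + p * s * (1 + a) ≤
      (1 + (p - 2) * s) * ((1 + s) ^ 2 + p / 2 * (a ^ 2 - s ^ 2)) := by
  have hq : 0 ≤ p - 3 := by linarith
  have hsa' : 0 ≤ a - s := by linarith
  nlinarith [mul_nonneg (mul_nonneg hsa' hsa') (show (0:ℝ) ≤ 3 - 2 * a - s by linarith),
    mul_nonneg hq (mul_nonneg hsa' hsa'), mul_nonneg hq (mul_nonneg hs hs),
    mul_nonneg hq (mul_nonneg (mul_nonneg (hs.trans hsa) (hs.trans hsa)) hs),
    mul_nonneg (mul_nonneg hq (show (0:ℝ) ≤ p - 1 by linarith))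
      (mul_nonneg (mul_nonneg hs hsa') (show (0:ℝ) ≤ a + s by linarith))]

theorem brezisLieb_ineq_of_nonneg (hp : 3 ≤ p) (hs : 0 ≤ s) (hsa : s ≤ a) (ha : a ≤ 1) :
    1 + a ^ p + p * (1 + a ^ (p - 2)) * s ≤ (1 + a ^ 2 + 2 * s) ^ (p / 2) := by
  have hs1 : 0 < 1 + s := by linarith
  have hw : 0 ≤ a ^ 2 - s ^ 2 := by nlinarith
  have htangent := rpow_add_mul_rpow_sub_one_mul_sub_le_rpow (pow_pos hs1 2)
    (show 0 ≤ 1 + a ^ 2 + 2 * s by nlinarith) (show 1 ≤ p / 2 by linarith)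
  rw [show p / 2 - 1 = (p - 2) / 2 by ring, sq_rpow_div_two hs1.le, sq_rpow_div_two hs1.le,
    show 1 + a ^ 2 + 2 * s - (1 + s) ^ 2 = a ^ 2 - s ^ 2 by ring] at htangent
  have hsplit : (1 + s) ^ p = (1 + s) ^ (p - 2) * (1 + s) ^ 2 := by
    rw [← rpow_natCast, ← rpow_add hs1]
    norm_num
  have hbern : 1 + (p - 2) * s ≤ (1 + s) ^ (p - 2) :=
    one_add_mul_self_le_rpow_one_add (by linarith) (by linarith)
  have hap : a ^ p ≤ a ^ 3 := by
    exact_mod_cast rpow_le_rpow_of_exponent_ge' (hs.trans hsa) ha (by norm_num) hp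
  have hap2 : a ^ (p - 2) ≤ a := by
    simpa using rpow_le_rpow_of_exponent_ge' (hs.trans hsa) ha zero_le_one (by linarith)
  calc 1 + a ^ p + p * (1 + a ^ (p - 2)) * s ≤ 1 + a ^ 3 + p * s * (1 + a) := by
        nlinarith [mul_le_mul_of_nonneg_right hap2 (by positivity : 0 ≤ p * s)]
    _ ≤ (1 + (p - 2) * s) * ((1 + s) ^ 2 + p / 2 * (a ^ 2 - s ^ 2)) :=
        polynomial_lower_bound_of_nonneg hp hs hsa ha
    _ ≤ (1 + s) ^ (p - 2) * ((1 + s) ^ 2 + p / 2 * (a ^ 2 - s ^ 2)) := by gcongr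
    _ = (1 + s) ^ p + p / 2 * (1 + s) ^ (p - 2) * (a ^ 2 - s ^ 2) := by rw [hsplit]; ring
    _ ≤ (1 + a ^ 2 + 2 * s) ^ (p / 2) := htangent

theorem brezisLieb_ineq_of_neg (hp : 2 ≤ p) (hs : s < 0) (has : -a ≤ s) (hs1 : -1 ≤ s) :
    1 + a ^ p + p * (1 + a ^ (p - 2)) * s ≤ (1 + a ^ 2 + 2 * s) ^ (p / 2) := by
  have ha : 0 < a := by linarith
  have hw : 0 ≤ a ^ 2 - s ^ 2 := by nlinarith
  have hsuper := add_rpow_le_rpow_add (sq_nonneg (1 + s)) hw (show 1 ≤ p / 2 by linarith)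
  rw [sq_rpow_div_two (by linarith),
    show (1 + s) ^ 2 + (a ^ 2 - s ^ 2) = 1 + a ^ 2 + 2 * s by ring] at hsuper
  have hbern : 1 + p * s ≤ (1 + s) ^ p := one_add_mul_self_le_rpow_one_add hs1 (by linarith)
  have htangent := rpow_add_mul_rpow_sub_one_mul_sub_le_rpow (pow_pos ha 2) hw
    (show 1 ≤ p / 2 by linarith)
  rw [show p / 2 - 1 = (p - 2) / 2 by ring, sq_rpow_div_two ha.le, sq_rpow_div_two ha.le,
    show a ^ 2 - s ^ 2 - a ^ 2 = -s ^ 2 by ring] at htangent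
  have hcorr : 0 ≤ p * a ^ (p - 2) * (-s * (s + 2)) := by
    have : 0 ≤ -s * (s + 2) := mul_nonneg (by linarith) (by linarith)
    positivity
  linarith

theorem brezisLieb_ineq (hp : 3 ≤ p) (hsa : |s| ≤ a) (ha : a ≤ 1) :
    1 + a ^ p + p * (1 + a ^ (p - 2)) * s ≤ (1 + a ^ 2 + 2 * s) ^ (p / 2) := by
  obtain ⟨has, hsa⟩ := abs_le.mp hsa
  rcases le_or_gt 0 s with hs | hs
  · exact brezisLieb_ineq_of_nonneg hp hs hsa ha
  · exact brezisLieb_ineq_of_neg (by linarith) hs has (by linarith)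

end KeyInequality

theorem stmt2 (p t θ : ℝ) (hp : 3 ≤ p) (ht : |t| ≤ 1) (hθ : |θ| ≤ 1) :
    (1 + t ^ 2 + 2 * t * θ) ^ (p / 2) ≥
      1 + |t| ^ p + p * (Real.sign t * |t| ^ (p - 1)) * θ + p * t * θ := by
  have htθ : |t * θ| ≤ |t| := by
    rw [abs_mul]
    exact mul_le_of_le_one_right (abs_nonneg t) hθ
  rw [ge_iff_le, sign_mul_abs_rpow, show p - 1 - 1 = p - 2 by ring,
    show 1 + t ^ 2 + 2 * t * θ = 1 + |t| ^ 2 + 2 * (t * θ) by rw [sq_abs]; ring]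
  convert brezisLieb_ineq hp htθ ht using 1
  ring
end

section
/- Let 1 ≤ q ≤ p < ∞, let φ : ℝ → ℝ be continuous with |φ(t)| ≤ C(1 + |t|^q) for some C > 0, and let v ∈ L^p([0,1]). With T_j v(x) = v(frac(jx)), the sequence φ(T_j v) = T_j(φ ∘ v) converges weakly in L^{p/q}([0,1]) (weakly-* in L^1 tested against L^∞ if p = q) to the constant ∫₀¹ φ(v(s)) ds: that is, for every ψ ∈ L^∞([0,1]), ∫₀¹ φ(v(frac(jx))) ψ(x) dx → (∫₀¹ φ(v(s)) ds)(∫₀¹ ψ dx). -/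
/-!
Put `G := (φ ∘ v) ∘ Int.fract`, a 1-periodic function integrable over a period; the integrand is
`G (j x) ψ x`. For continuous `χ`, the substitution `y = j x` and periodicity give
`∫₀¹ G (j x) χ x dx = ∫₀¹ G u R_j(u) du`, where `R_j(u)` is the Riemann sum of `χ` on `j` equal
cells with tags `(u + k) / j`; these converge to `∫₀¹ χ` uniformly in `u`, which yields the limit
`(∫₀¹ G) (∫₀¹ χ)`. The general case follows by two approximations, each with an error bound
uniform in `j`: first `ψ ∈ L¹` is approximated by continuous `χ` while `G` is bounded (error at
most `sup |G| · ‖ψ - χ‖₁`), then `G` is approximated in `L¹` by bounded periodic functions while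
`ψ ∈ L^∞` (error at most `‖ψ‖_∞ · ‖G - H‖₁`, since `x ↦ G (j x)` has the same `L¹` norm on
`[0, 1]` as `G`).
-/

open Filter MeasureTheory Set Topology

theorem tendsto_of_forall_approx {ι α : Type*} [PseudoMetricSpace α] {l : Filter ι}
    {a : ι → α} {L : α} (C : ℝ)
    (h : ∀ ε > 0, ∃ b : ι → α, ∃ M : α, (∀ᶠ i in l, dist (a i) (b i) ≤ C * ε) ∧
      dist M L ≤ C * ε ∧ Tendsto b l (𝓝 M)) :
    Tendsto a l (𝓝 L) := by
  refine Metric.tendsto_nhds.mpr fun ε hε => ?_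
  set δ := ε / (4 * (|C| + 1))
  have hCδ : C * δ ≤ ε / 4 := by
    calc C * δ ≤ (|C| + 1) * δ := by gcongr; linarith [le_abs_self C]
      _ = ε / 4 := by simp only [δ]; field_simp
  obtain ⟨b, M, hab, hML, hb⟩ := h δ (by positivity)
  filter_upwards [hab, Metric.tendsto_nhds.mp hb (ε / 4) (by positivity)] with i hai hbi
  calc dist (a i) L ≤ dist (a i) (b i) + dist (b i) M + dist M L := dist_triangle4 _ _ _ _
    _ < ε := by linarith

theorem MeasureTheory.MemLp.exists_ae_abs_le {α : Type*} [MeasurableSpace α] {μ : Measure α}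
    {f : α → ℝ} (hf : MemLp f ⊤ μ) : ∃ M, 0 ≤ M ∧ ∀ᵐ x ∂μ, |f x| ≤ M := by
  refine ⟨(eLpNorm f ⊤ μ).toReal, ENNReal.toReal_nonneg, ?_⟩
  filter_upwards [ae_le_eLpNormEssSup (f := f) (μ := μ)] with x hx
  rw [← eLpNorm_exponent_top] at hx
  simpa using ENNReal.toReal_mono hf.2.ne hx

theorem MeasureTheory.MemLp.integrable_comp_of_growth {α : Type*} [MeasurableSpace α]
    {μ : Measure α} [IsFiniteMeasure μ] {v : α → ℝ} {φ : ℝ → ℝ} {C q : ℝ} (hq : 0 < q)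
    (hφ : Continuous φ) (hgrowth : ∀ t, |φ t| ≤ C * (1 + |t| ^ q))
    (hv : MemLp v (ENNReal.ofReal q) μ) :
    Integrable (fun x => φ (v x)) μ := by
  have hvq : Integrable (fun x => ‖v x‖ ^ q) μ := by
    simpa [ENNReal.toReal_ofReal hq.le] using
      hv.integrable_norm_rpow (by simpa using hq) ENNReal.ofReal_ne_top
  refine (((integrable_const 1).add hvq).const_mul C).mono'
    (hφ.comp_aestronglyMeasurable hv.1) (Eventually.of_forall fun x => ?_)
  simpa using hgrowth (v x)

theorem abs_intervalIntegral_mul_le_of_abs_le {f g : ℝ → ℝ} {a b K : ℝ} (hab : a ≤ b)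
    (hf : ∀ᵐ x, x ∈ Ioc a b → |f x| ≤ K) (hg : IntervalIntegrable g volume a b) :
    |∫ x in a..b, f x * g x| ≤ K * ∫ x in a..b, |g x| := by
  rw [← Real.norm_eq_abs, ← intervalIntegral.integral_const_mul K]
  refine intervalIntegral.norm_integral_le_of_norm_le hab ?_ (hg.abs.const_mul K)
  filter_upwards [hf] with x hx hmem
  rw [Real.norm_eq_abs, abs_mul]
  exact mul_le_mul_of_nonneg_right (hx hmem) (abs_nonneg _)

theorem Measurable.intervalIntegrable_of_abs_le {f : ℝ → ℝ} (hf : Measurable f) {K : ℝ}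
    (hK : ∀ y, |f y| ≤ K) (a b : ℝ) : IntervalIntegrable f volume a b :=
  ⟨.of_bound measure_Ioc_lt_top hf.aestronglyMeasurable K (Eventually.of_forall hK),
    .of_bound measure_Ioc_lt_top hf.aestronglyMeasurable K (Eventually.of_forall hK)⟩

theorem comp_fract_ae_eq_restrict_Ioc {α : Type*} (f : ℝ → α) :
    (fun x => f (Int.fract x)) =ᵐ[volume.restrict (Ioc 0 1)] f := by
  rw [← Measure.restrict_congr_set Ioo_ae_eq_Ioc]
  filter_upwards [ae_restrict_mem measurableSet_Ioo] with x hx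
  rw [Int.fract_eq_self.mpr ⟨hx.1.le, hx.2⟩]

theorem exists_periodic_bounded_intervalIntegral_abs_sub_le {G : ℝ → ℝ}
    (hGi : IntervalIntegrable G volume 0 1) {ε : ℝ} (hε : 0 < ε) :
    ∃ H : ℝ → ℝ, Function.Periodic H 1 ∧ Measurable H ∧ (∃ K, ∀ y, |H y| ≤ K) ∧
      ∫ x in 0..1, |G x - H x| ≤ ε := by
  obtain ⟨h, hGh, -⟩ := hGi.1.exists_boundedContinuous_integral_sub_le hε
  refine ⟨fun y => h (Int.fract y), (Int.fract_periodic ℝ).comp h,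
    h.continuous.measurable.comp measurable_fract, ⟨‖h‖, fun y => h.norm_coe_le_norm _⟩, ?_⟩
  rw [intervalIntegral.integral_of_le zero_le_one]
  refine le_of_eq_of_le (integral_congr_ae ?_) hGh
  filter_upwards [comp_fract_ae_eq_restrict_Ioc h] with x hx
  simp [hx]

noncomputable def shiftedRiemannSum (χ : ℝ → ℝ) (j : ℕ) (u : ℝ) : ℝ :=
  (j : ℝ)⁻¹ * ∑ k ∈ Finset.range j, χ ((u + k) / j)

theorem Continuous.shiftedRiemannSum {χ : ℝ → ℝ} (hχ : Continuous χ) (j : ℕ) :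
    Continuous (shiftedRiemannSum χ j) := by
  unfold _root_.shiftedRiemannSum
  fun_prop

theorem intervalIntegral_sub_shiftedRiemannSum {χ : ℝ → ℝ} (hχ : Continuous χ) {j : ℕ}
    (hj : j ≠ 0) (u : ℝ) :
    (∫ x in 0..1, χ x) - shiftedRiemannSum χ j u =
      ∑ k ∈ Finset.range j, ∫ x in (k / j : ℝ)..((k + 1 : ℕ) / j : ℝ), (χ x - χ ((u + k) / j)) := by
  have hj' : (j : ℝ) ≠ 0 := Nat.cast_ne_zero.mpr hj
  have h01 : ∫ x in 0..1, χ x =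
      ∑ k ∈ Finset.range j, ∫ x in (k / j : ℝ)..((k + 1 : ℕ) / j : ℝ), χ x := by
    rw [intervalIntegral.sum_integral_adjacent_intervals fun k _ => hχ.intervalIntegrable _ _]
    simp [hj']
  rw [h01, shiftedRiemannSum, Finset.mul_sum, ← Finset.sum_sub_distrib]
  refine Finset.sum_congr rfl fun k _ => ?_
  rw [intervalIntegral.integral_sub (hχ.intervalIntegrable _ _) intervalIntegrable_const,
    intervalIntegral.integral_const, smul_eq_mul]
  push_cast
  field_simp
  ring

theorem tendstoUniformlyOn_shiftedRiemannSum {χ : ℝ → ℝ} (hχ : Continuous χ) :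
    TendstoUniformlyOn (shiftedRiemannSum χ) (fun _ => ∫ x in 0..1, χ x) atTop (Icc 0 1) := by
  rw [Metric.tendstoUniformlyOn_iff]
  intro ε hε
  obtain ⟨δ, hδ, hχδ⟩ := Metric.uniformContinuousOn_iff.mp
    ((isCompact_Icc (a := (0 : ℝ)) (b := 1)).uniformContinuousOn_of_continuous hχ.continuousOn)
    (ε / 2) (by positivity)
  filter_upwards [eventually_gt_atTop 0,
    tendsto_one_div_atTop_nhds_zero_nat.eventually (gt_mem_nhds hδ)] with j hj hjδ u hu
  have hj' : (0 : ℝ) < j := Nat.cast_pos.mpr hj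
  have hterm : ∀ k ∈ Finset.range j,
      |∫ x in (k / j : ℝ)..((k + 1 : ℕ) / j : ℝ), (χ x - χ ((u + k) / j))| ≤ ε / 2 * (1 / j) := by
    intro k hk
    have hkj : (k : ℝ) + 1 ≤ j := by exact_mod_cast Finset.mem_range.mp hk
    have hle : (k / j : ℝ) ≤ (k + 1 : ℕ) / j := by gcongr; simp
    have hlen : ((k + 1 : ℕ) / j : ℝ) - k / j = 1 / j := by push_cast; field_simp; ring
    have hsub : Icc (k / j : ℝ) ((k + 1 : ℕ) / j) ⊆ Icc 0 1 :=
      Icc_subset_Icc (by positivity) (by rw [div_le_one hj']; exact_mod_cast hkj)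
    have hmem : (u + k) / j ∈ Icc (k / j : ℝ) ((k + 1 : ℕ) / j) := by
      push_cast
      exact ⟨div_le_div_of_nonneg_right (by linarith [hu.1]) hj'.le,
        div_le_div_of_nonneg_right (by linarith [hu.2]) hj'.le⟩
    rw [← Real.norm_eq_abs, ← hlen, ← abs_of_nonneg (sub_nonneg.mpr hle)]
    refine intervalIntegral.norm_integral_le_of_norm_le_const fun x hx => ?_
    rw [uIoc_of_le hle] at hx
    have hx' := Ioc_subset_Icc_self hx
    refine (hχδ x (hsub hx') _ (hsub hmem) ?_).le
    exact (Real.dist_le_of_mem_Icc hx' hmem).trans_lt (hlen ▸ hjδ)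
  rw [Real.dist_eq, intervalIntegral_sub_shiftedRiemannSum hχ hj.ne']
  calc _ ≤ ∑ k ∈ Finset.range j, ε / 2 * (1 / j) :=
        (Finset.abs_sum_le_sum_abs _ _).trans (Finset.sum_le_sum hterm)
    _ = ε / 2 := by rw [Finset.sum_const, Finset.card_range, nsmul_eq_mul]; field_simp
    _ < ε := by linarith

namespace Function.Periodic

section

variable {E : Type*} [NormedAddCommGroup E] {G : ℝ → E}

theorem intervalIntegrable_comp_mul (hG : Periodic G 1) (hGi : IntervalIntegrable G volume 0 1)
    (c : ℝ) : IntervalIntegrable (fun x => G (c * x)) volume 0 1 := by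
  rcases eq_or_ne c 0 with rfl | hc
  · simp
  · simpa [div_self hc] using (hG.intervalIntegrable₀ one_ne_zero hGi 0 c).comp_mul_left (c := c)

theorem intervalIntegral_comp_nat_mul [NormedSpace ℝ E] (hG : Periodic G 1)
    (hGi : IntervalIntegrable G volume 0 1) {j : ℕ} (hj : j ≠ 0) :
    ∫ x in 0..1, G (j * x) = ∫ x in 0..1, G x := by
  have hj' : (j : ℝ) ≠ 0 := Nat.cast_ne_zero.mpr hj
  have h := hG.intervalIntegral_add_zsmul_eq j 0 (hG.intervalIntegrable₀ one_ne_zero hGi)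
  simp only [zero_add, Int.cast_natCast, zsmul_eq_mul, mul_one] at h
  rw [intervalIntegral.integral_comp_mul_left _ hj', mul_zero, mul_one, h, natCast_zsmul,
    ← Nat.cast_smul_eq_nsmul ℝ, smul_smul, inv_mul_cancel₀ hj', one_smul]

end

variable {G : ℝ → ℝ}

theorem abs_intervalIntegral_comp_nat_mul_mul_le (hG : Periodic G 1)
    (hGi : IntervalIntegrable G volume 0 1) {ψ : ℝ → ℝ} {M : ℝ}
    (hM : ∀ᵐ x, x ∈ Ioc 0 1 → |ψ x| ≤ M) {j : ℕ} (hj : j ≠ 0) :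
    |∫ x in 0..1, G (j * x) * ψ x| ≤ M * ∫ x in 0..1, |G x| := by
  have hGabs : Periodic (fun x => |G x|) 1 := fun x => by simp only [hG x]
  simp_rw [mul_comm (G _)]
  rw [← hGabs.intervalIntegral_comp_nat_mul hGi.abs hj]
  exact abs_intervalIntegral_mul_le_of_abs_le zero_le_one hM (hG.intervalIntegrable_comp_mul hGi j)

theorem intervalIntegral_comp_nat_mul_mul {χ : ℝ → ℝ} (hG : Periodic G 1)
    (hGi : IntervalIntegrable G volume 0 1) (hχ : Continuous χ) {j : ℕ} (hj : j ≠ 0) :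
    ∫ x in 0..1, G (j * x) * χ x = ∫ u in 0..1, G u * shiftedRiemannSum χ j u := by
  have hj' : (j : ℝ) ≠ 0 := Nat.cast_ne_zero.mpr hj
  set F : ℝ → ℝ := fun y => G y * χ (y / j)
  have hF : ∀ a b, IntervalIntegrable F volume a b := fun a b =>
    (hG.intervalIntegrable₀ one_ne_zero hGi a b).mul_continuousOn (by fun_prop)
  calc ∫ x in 0..1, G (j * x) * χ x = ∫ x in 0..1, F (j * x) := by
        simp only [F, mul_div_cancel_left₀ _ hj']
    _ = (j : ℝ)⁻¹ * ∑ k ∈ Finset.range j, ∫ y in (k : ℝ)..((k + 1 : ℕ) : ℝ), F y := by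
        rw [intervalIntegral.integral_comp_mul_left _ hj',
          intervalIntegral.sum_integral_adjacent_intervals fun k _ => hF _ _]
        simp
    _ = (j : ℝ)⁻¹ * ∑ k ∈ Finset.range j, ∫ u in 0..1, G u * χ ((u + k) / j) := by
        congr 1
        refine Finset.sum_congr rfl fun k _ => ?_
        have hGk : ∀ x, G (x + k) = G x := by simpa using hG.nat_mul k
        rw [← zero_add (k : ℝ), Nat.cast_succ, add_comm (k : ℝ) 1,
          ← intervalIntegral.integral_comp_add_right, zero_add]
        simp only [F, hGk]
    _ = _ := by
        simp_rw [shiftedRiemannSum, Finset.mul_sum]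
        rw [intervalIntegral.integral_finsetSum fun k _ => hGi.mul_continuousOn (by fun_prop)]
        simp_rw [mul_left_comm (G _), intervalIntegral.integral_const_mul]

theorem tendsto_intervalIntegral_comp_nat_mul_mul_of_continuous (hG : Periodic G 1)
    (hGi : IntervalIntegrable G volume 0 1) {χ : ℝ → ℝ} (hχ : Continuous χ) :
    Tendsto (fun j : ℕ => ∫ x in 0..1, G (j * x) * χ x) atTop
      (𝓝 ((∫ x in 0..1, G x) * ∫ x in 0..1, χ x)) := by
  set c := ∫ x in 0..1, χ x
  have hR := tendstoUniformlyOn_shiftedRiemannSum hχ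
  have hlim : Tendsto (fun j : ℕ => ∫ u in 0..1, G u * shiftedRiemannSum χ j u)
      atTop (𝓝 (∫ u in 0..1, G u * c)) := by
    refine intervalIntegral.tendsto_integral_filter_of_dominated_convergence
      (fun u => |G u| * (|c| + 1)) (Eventually.of_forall fun j => ?_) ?_
      (hGi.abs.mul_const _) ?_
    · rw [uIoc_of_le zero_le_one]
      exact hGi.aestronglyMeasurable.mul (hχ.shiftedRiemannSum j).aestronglyMeasurable
    · filter_upwards [Metric.tendstoUniformlyOn_iff.mp hR 1 one_pos] with j hj
      refine Eventually.of_forall fun u hu => ?_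
      rw [uIoc_of_le zero_le_one] at hu
      have hclose := hj u (Ioc_subset_Icc_self hu)
      rw [Real.dist_eq, abs_sub_comm] at hclose
      rw [Real.norm_eq_abs, abs_mul]
      gcongr
      linarith [abs_sub_abs_le_abs_sub (shiftedRiemannSum χ j u) c]
    · refine Eventually.of_forall fun u hu => ?_
      rw [uIoc_of_le zero_le_one] at hu
      exact (hR.tendsto_at (Ioc_subset_Icc_self hu)).const_mul _
  rw [intervalIntegral.integral_mul_const] at hlim
  refine hlim.congr' ?_
  filter_upwards [eventually_ne_atTop 0] with j hj
  exact (hG.intervalIntegral_comp_nat_mul_mul hGi hχ hj).symm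

theorem tendsto_intervalIntegral_comp_nat_mul_mul_of_bounded (hG : Periodic G 1)
    (hGm : Measurable G) {K : ℝ} (hK : ∀ y, |G y| ≤ K) {ψ : ℝ → ℝ}
    (hψ : IntervalIntegrable ψ volume 0 1) :
    Tendsto (fun j : ℕ => ∫ x in 0..1, G (j * x) * ψ x) atTop
      (𝓝 ((∫ x in 0..1, G x) * ∫ x in 0..1, ψ x)) := by
  have hK0 : 0 ≤ K := (abs_nonneg _).trans (hK 0)
  have hprod : ∀ (c : ℝ) {f : ℝ → ℝ}, IntervalIntegrable f volume 0 1 →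
      IntervalIntegrable (fun x => G (c * x) * f x) volume 0 1 := fun c f hf =>
    (intervalIntegrable_iff_integrableOn_Ioc_of_le zero_le_one).mpr <|
      hf.1.bdd_mul (hGm.comp (measurable_const_mul c)).aestronglyMeasurable
        (Eventually.of_forall fun _ => hK _)
  have hGi : IntervalIntegrable G volume 0 1 := hGm.intervalIntegrable_of_abs_le hK 0 1
  refine tendsto_of_forall_approx K fun ε hε => ?_
  obtain ⟨χ, -, hψχ, hχ, -⟩ := hψ.1.exists_hasCompactSupport_integral_sub_le hε
  rw [← intervalIntegral.integral_of_le zero_le_one] at hψχ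
  simp only [Real.norm_eq_abs] at hψχ
  have hχi : IntervalIntegrable χ volume 0 1 := hχ.intervalIntegrable 0 1
  refine ⟨fun j => ∫ x in 0..1, G (j * x) * χ x, (∫ x in 0..1, G x) * ∫ x in 0..1, χ x,
    Eventually.of_forall fun j => ?_, ?_,
    hG.tendsto_intervalIntegral_comp_nat_mul_mul_of_continuous hGi hχ⟩
  · rw [Real.dist_eq, ← intervalIntegral.integral_sub (hprod j hψ) (hprod j hχi)]
    simp_rw [← mul_sub]
    calc _ ≤ K * ∫ x in 0..1, |ψ x - χ x| :=
          abs_intervalIntegral_mul_le_of_abs_le zero_le_one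
            (Eventually.of_forall fun _ _ => hK _) (hψ.sub hχi)
      _ ≤ K * ε := by gcongr
  · rw [Real.dist_eq, ← mul_sub, ← intervalIntegral.integral_sub hχi hψ, abs_mul]
    refine mul_le_mul ?_ ?_ (abs_nonneg _) hK0
    · simpa using intervalIntegral.norm_integral_le_of_norm_le_const (a := 0) (b := 1)
        fun x _ => (Real.norm_eq_abs _).trans_le (hK x)
    · refine (intervalIntegral.abs_integral_le_integral_abs zero_le_one).trans ?_
      simpa only [abs_sub_comm] using hψχ

theorem tendsto_intervalIntegral_comp_nat_mul_mul (hG : Periodic G 1)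
    (hGi : IntervalIntegrable G volume 0 1) {ψ : ℝ → ℝ}
    (hψ : MemLp ψ ⊤ (volume.restrict (Ioc 0 1))) :
    Tendsto (fun j : ℕ => ∫ x in 0..1, G (j * x) * ψ x) atTop
      (𝓝 ((∫ x in 0..1, G x) * ∫ x in 0..1, ψ x)) := by
  obtain ⟨M, hM0, hM⟩ := hψ.exists_ae_abs_le
  rw [ae_restrict_iff' measurableSet_Ioc] at hM
  have hψi : IntervalIntegrable ψ volume 0 1 :=
    (intervalIntegrable_iff_integrableOn_Ioc_of_le zero_le_one).mpr (hψ.integrable le_top)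
  have hprod : ∀ {F : ℝ → ℝ}, Periodic F 1 → IntervalIntegrable F volume 0 1 → ∀ j : ℕ,
      IntervalIntegrable (fun x => F (j * x) * ψ x) volume 0 1 := fun hF hFi j =>
    (intervalIntegrable_iff_integrableOn_Ioc_of_le zero_le_one).mpr <|
      (hF.intervalIntegrable_comp_mul hFi j).1.mul_bdd hψ.1
        ((ae_restrict_iff' measurableSet_Ioc).mpr hM)
  refine tendsto_of_forall_approx M fun ε hε => ?_
  obtain ⟨H, hH, hHm, ⟨K, hK⟩, hGH⟩ := exists_periodic_bounded_intervalIntegral_abs_sub_le hGi hε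
  have hHi : IntervalIntegrable H volume 0 1 := hHm.intervalIntegrable_of_abs_le hK 0 1
  refine ⟨fun j => ∫ x in 0..1, H (j * x) * ψ x, (∫ x in 0..1, H x) * ∫ x in 0..1, ψ x,
    ?_, ?_, hH.tendsto_intervalIntegral_comp_nat_mul_mul_of_bounded hHm hK hψi⟩
  · filter_upwards [eventually_ne_atTop 0] with j hj
    rw [Real.dist_eq, ← intervalIntegral.integral_sub (hprod hG hGi j) (hprod hH hHi j)]
    simp_rw [← sub_mul]
    exact ((hG.sub hH).abs_intervalIntegral_comp_nat_mul_mul_le (hGi.sub hHi) hM hj).trans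
      (mul_le_mul_of_nonneg_left hGH hM0)
  · rw [Real.dist_eq, ← sub_mul, ← intervalIntegral.integral_sub hHi hGi, abs_mul, mul_comm M]
    refine mul_le_mul ?_ ?_ (abs_nonneg _) hε.le
    · refine (intervalIntegral.abs_integral_le_integral_abs zero_le_one).trans ?_
      simpa only [abs_sub_comm] using hGH
    · simpa using intervalIntegral.norm_integral_le_of_norm_le_const_ae (a := 0) (b := 1)
        (f := ψ) (by rwa [uIoc_of_le zero_le_one])

end Function.Periodic

theorem stmt8_general (p q : ℝ) (hq : 1 ≤ q) (hqp : q ≤ p)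
    (φ : ℝ → ℝ) (hφ : Continuous φ) (C : ℝ)
    (hgrowth : ∀ t : ℝ, |φ t| ≤ C * (1 + |t| ^ q))
    (v : ℝ → ℝ) (hv : MemLp v (ENNReal.ofReal p) (volume.restrict (Icc (0:ℝ) 1)))
    (ψ : ℝ → ℝ) (hψ : MemLp ψ ⊤ (volume.restrict (Icc (0:ℝ) 1))) :
    Tendsto (fun j : ℕ => ∫ x in Icc (0:ℝ) 1, φ (v (Int.fract (j * x))) * ψ x)
      atTop (nhds ((∫ s in Icc (0:ℝ) 1, φ (v s)) * ∫ x in Icc (0:ℝ) 1, ψ x)) := by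
  set g : ℝ → ℝ := fun s => φ (v s)
  have hg : IntegrableOn g (Icc 0 1) :=
    (hv.mono_exponent (ENNReal.ofReal_le_ofReal hqp)).integrable_comp_of_growth
      (by linarith) hφ hgrowth
  have hGg := comp_fract_ae_eq_restrict_Ioc g
  have hGi : IntervalIntegrable (fun y => g (Int.fract y)) volume 0 1 :=
    (intervalIntegrable_iff_integrableOn_Ioc_of_le zero_le_one).mpr <|
      (hg.mono_set Ioc_subset_Icc_self).congr hGg.symm
  have hψ' : MemLp ψ ⊤ (volume.restrict (Ioc 0 1)) :=
    hψ.mono_measure (Measure.restrict_mono Ioc_subset_Icc_self le_rfl)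
  have hG : Function.Periodic (fun y => g (Int.fract y)) 1 := (Int.fract_periodic ℝ).comp g
  have hGint : ∫ s in 0..1, g (Int.fract s) = ∫ s in 0..1, g s := by
    simp only [intervalIntegral.integral_of_le zero_le_one]
    exact integral_congr_ae hGg
  simp only [integral_Icc_eq_integral_Ioc, ← intervalIntegral.integral_of_le zero_le_one]
  simpa only [hGint] using hG.tendsto_intervalIntegral_comp_nat_mul_mul hGi hψ'

theorem stmt8 (p q : ℝ) (hq : 1 ≤ q) (hqp : q ≤ p)
    (φ : ℝ → ℝ) (hφ : Continuous φ) (C : ℝ) (hC : 0 < C)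
    (hgrowth : ∀ t : ℝ, |φ t| ≤ C * (1 + |t| ^ q))
    (v : ℝ → ℝ) (hv : MemLp v (ENNReal.ofReal p) (volume.restrict (Icc (0:ℝ) 1)))
    (ψ : ℝ → ℝ) (hψ : MemLp ψ ⊤ (volume.restrict (Icc (0:ℝ) 1))) :
    Tendsto (fun j : ℕ => ∫ x in Icc (0:ℝ) 1, φ (v (Int.fract (j * x))) * ψ x)
      atTop (nhds ((∫ s in Icc (0:ℝ) 1, φ (v s)) * ∫ x in Icc (0:ℝ) 1, ψ x)) :=
  stmt8_general p q hq hqp φ hφ C hgrowth v hv ψ hψ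
end

section
/- Let ψ : ℝ → ℝ be Lipschitz with ψ ≥ 1, let a > 0, and consider for γ > 0 the solution v_γ of the ODE v'(t) = γ/ψ(v(t)) with v(0) = -a. Then there exists γ > 0 such that v_γ(1) = a. -/
/-!
Separation of variables: with `Φ x = ∫ s in -a..x, ψ s`, which is a bijection of `ℝ` since
`Φ' = ψ ≥ 1`, the solution is `v t = Φ⁻¹ (γ * t)`, and `γ = Φ a > 0` makes `v 1 = a`.
-/

open Filter Function

section DerivBoundedBelow

variable {f f' : ℝ → ℝ} {c : ℝ}

theorem surjective_of_hasDerivAt_of_pos_le (hc : 0 < c) (hf : ∀ x, HasDerivAt f (f' x) x)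
    (hf' : ∀ x, c ≤ f' x) : Surjective f := by
  have hdiff : Differentiable ℝ f := fun x => (hf x).differentiableAt
  have hderiv : ∀ x, c ≤ deriv f x := fun x => (hf x).deriv ▸ hf' x
  have growth : ∀ ⦃x y⦄, x ≤ y → c * (y - x) ≤ f y - f x :=
    mul_sub_le_image_sub_of_le_deriv hdiff hderiv
  refine hdiff.continuous.surjective ?_ ?_
  · refine tendsto_atTop_mono' _ ?_ (tendsto_atTop_add_const_left _ (f 0)
      (tendsto_id.const_mul_atTop hc))
    filter_upwards [eventually_ge_atTop 0] with x hx
    show f 0 + c * x ≤ f x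
    linarith [growth hx]
  · refine tendsto_atBot_mono' _ ?_ (tendsto_atBot_add_const_left _ (f 0)
      (tendsto_id.const_mul_atBot hc))
    filter_upwards [eventually_le_atBot 0] with x hx
    show f x ≤ f 0 + c * x
    linarith [growth hx]

theorem exists_leftInverse_hasDerivAt_inv_of_pos_le (hc : 0 < c)
    (hf : ∀ x, HasDerivAt f (f' x) x) (hf' : ∀ x, c ≤ f' x) :
    ∃ g : ℝ → ℝ, LeftInverse g f ∧ ∀ y, HasDerivAt g (f' (g y))⁻¹ y := by
  have hpos : ∀ x, 0 < f' x := fun x => hc.trans_le (hf' x)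
  let e := StrictMono.orderIsoOfSurjective f (strictMono_of_hasDerivAt_pos hf hpos)
    (surjective_of_hasDerivAt_of_pos_le hc hf hf')
  refine ⟨e.symm, e.symm_apply_apply, fun y => ?_⟩
  exact (hf (e.symm y)).of_local_left_inverse e.symm.continuous.continuousAt (hpos _).ne'
    (Eventually.of_forall e.apply_symm_apply)

end DerivBoundedBelow

theorem stmt9 (ψ : ℝ → ℝ) (K : NNReal) (hψ : LipschitzWith K ψ)
    (hψ1 : ∀ t, 1 ≤ ψ t) (a : ℝ) (ha : 0 < a) :
    ∃ γ : ℝ, 0 < γ ∧ ∃ v : ℝ → ℝ, v 0 = -a ∧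
      (∀ t, HasDerivAt v (γ / ψ (v t)) t) ∧ v 1 = a := by
  have hcont : Continuous ψ := hψ.continuous
  set Φ : ℝ → ℝ := fun x => ∫ s in (-a)..x, ψ s
  have hΦ : ∀ x, HasDerivAt Φ (ψ x) x := fun x =>
    (hcont.integral_hasStrictDerivAt (-a) x).hasDerivAt
  obtain ⟨g, hgΦ, hg⟩ := exists_leftInverse_hasDerivAt_inv_of_pos_le one_pos hΦ hψ1
  have hγ : 0 < Φ a := intervalIntegral.intervalIntegral_pos_of_pos_on
    (hcont.intervalIntegrable _ _) (fun x _ => one_pos.trans_le (hψ1 x)) (by linarith)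
  refine ⟨Φ a, hγ, fun t => g (Φ a * t), ?_, fun t => ?_, by simpa using hgΦ a⟩
  · have hΦa : Φ (-a) = 0 := intervalIntegral.integral_same
    simpa [hΦa] using hgΦ (-a)
  · simpa [div_eq_inv_mul, comp_def] using
      (hg (Φ a * t)).comp t ((hasDerivAt_id t).const_mul (Φ a))
end

section
/- Let φ₁, ..., φ_M : ℝ → ℝ be continuous functions, with φ_i odd for i = 1, ..., M-1, satisfying a polynomial growth bound |φ_i(t)| ≤ C(1 + |t|^q). Suppose that for every a > 0 and every Lipschitz function ψ ≥ 1 on [-a,a], the conditions ∫_{-a}^{a} φ_i(t) ψ(t) dt = 0 for i = 1, ..., M-1 imply ∫_{-a}^{a} φ_M(t) ψ(t) dt = 0. Then φ₁, ..., φ_M are linearly dependent as functions on ℝ. -/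
/-!
Fix `a > 0`. Adding a large constant `b` to a smooth compactly supported `g` gives an admissible
weight `ψ = g + b`; since `∫_{-a}^{a} φ i = 0` for the odd `φ i` and, by `ψ = 1`, also for the last
one, the hypothesis says that the functionals `g ↦ ∫_{-a}^{a} φ i g` on test functions satisfy
`⋂_{i ≠ last} ker ≤ ker (last)`. So the last one is a combination of the others, i.e. some
nontrivial `∑ c i φ i` annihilates every test function and therefore vanishes on `(-a, a)`.
The vectors `c` that work on `(-n, n)` form a decreasing chain of nonzero subspaces of `ℝ^(M+1)`,
which stabilizes; a nonzero `c` in the limit works on all of `ℝ`.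
-/

open MeasureTheory Set TopologicalSpace Distributions

theorem Function.Odd.setIntegral_Icc_neg_eq_zero {f : ℝ → ℝ} (hf : Function.Odd f) (a : ℝ) :
    ∫ t in Icc (-a) a, f t = 0 := by
  rcases lt_or_ge a 0 with ha | ha
  · rw [Icc_eq_empty (by linarith), Measure.restrict_empty, integral_zero_measure]
  have h : ∫ t in (-a)..a, f t = -∫ t in (-a)..a, f t :=
    calc ∫ t in (-a)..a, f t = ∫ t in (-a)..a, f (-t) := by
          rw [intervalIntegral.integral_comp_neg, neg_neg]
      _ = -∫ t in (-a)..a, f t := by simp only [hf _, intervalIntegral.integral_neg]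
  rw [integral_Icc_eq_integral_Ioc, ← intervalIntegral.integral_of_le (by linarith)]
  linarith

theorem eqOn_zero_of_setIntegral_testFunction_mul_eq_zero {E : Type*} [NormedAddCommGroup E]
    [NormedSpace ℝ E] [FiniteDimensional ℝ E] [MeasurableSpace E] [BorelSpace E] {μ : Measure E}
    [IsLocallyFiniteMeasure μ] [μ.IsOpenPosMeasure] {s : Set E} {h : E → ℝ} (hh : Continuous h)
    (H : ∀ g : 𝓓((⊤ : Opens E), ℝ), ∫ x in s, g x * h x ∂μ = 0) : EqOn h 0 (interior s) := by
  have hae : ∀ᵐ x ∂μ.restrict s, h x = 0 :=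
    ae_eq_zero_of_integral_contDiff_smul_eq_zero hh.locallyIntegrable fun g hg hgs =>
      H ⟨g, hg, hgs, by simp⟩
  exact Measure.eqOn_open_of_ae_eq (ae_restrict_of_ae_restrict_of_subset interior_subset hae)
    isOpen_interior hh.continuousOn continuousOn_const

theorem TestFunction.exists_lipschitzWith_add_const_one_le {E : Type*} [NormedAddCommGroup E]
    [NormedSpace ℝ E] {Ω : Opens E} {n : ℕ∞} (hn : n ≠ 0) (g : 𝓓^{n}(Ω, ℝ)) :
    ∃ b : ℝ, (∃ K, LipschitzWith K fun x => g x + b) ∧ ∀ x, 1 ≤ g x + b := by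
  obtain ⟨C, hC⟩ := g.hasCompactSupport.exists_bound_of_continuous g.continuous
  obtain ⟨K, hK⟩ := g.contDiff.lipschitzWith_of_hasCompactSupport g.hasCompactSupport
    (by exact_mod_cast hn)
  refine ⟨C + 1, ⟨K + 0, hK.add (LipschitzWith.const _)⟩, fun x => ?_⟩
  linarith [neg_abs_le (g x), (Real.norm_eq_abs _ ▸ hC x : |g x| ≤ C)]

theorem LinearMap.exists_ne_zero_sum_smul_eq_zero {𝕜 E ι : Type*} [Field 𝕜] [AddCommGroup E]
    [Module 𝕜 E] [Fintype ι] [DecidableEq ι] {L : ι → E →ₗ[𝕜] 𝕜} (i₀ : ι)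
    (h : ∀ v, (∀ i ≠ i₀, L i v = 0) → L i₀ v = 0) :
    ∃ c : ι → 𝕜, c ≠ 0 ∧ ∑ i, c i • L i = 0 := by
  have hker : ⨅ j : {i // i ≠ i₀}, ker (L j) ≤ ker (L i₀) := fun v hv => by
    simp only [Submodule.mem_iInf, LinearMap.mem_ker] at hv ⊢
    exact h v fun i hi => hv ⟨i, hi⟩
  obtain ⟨c, hc⟩ := (Submodule.mem_span_range_iff_exists_fun 𝕜).1 (mem_span_of_iInf_ker_le_ker hker)
  refine ⟨fun i => if hi : i = i₀ then -1 else c ⟨i, hi⟩,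
    fun h0 => by simpa using congr_fun h0 i₀, ?_⟩
  have hc' : ∀ j : {i // i ≠ i₀}, (if hi : (j : ι) = i₀ then -1 else c ⟨j, hi⟩) = c j :=
    fun j => dif_neg j.2
  rw [Fintype.sum_eq_add_sum_subtype_ne _ i₀]
  simp only [dif_pos, hc', hc]
  module

theorem exists_ne_zero_forall_sum_mul_eq_zero_of_monotone {𝕜 ι X : Type*} [Field 𝕜] [Fintype ι]
    (φ : ι → X → 𝕜) {S : ℕ → Set X} (hS : Monotone S) (hcover : ∀ x, ∃ n, x ∈ S n)
    (h : ∀ n, ∃ c : ι → 𝕜, c ≠ 0 ∧ ∀ x ∈ S n, ∑ i, c i * φ i x = 0) :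
    ∃ c : ι → 𝕜, c ≠ 0 ∧ ∀ x, ∑ i, c i * φ i x = 0 := by
  let A : ℕ →o (Submodule 𝕜 (ι → 𝕜))ᵒᵈ :=
    ⟨fun n => OrderDual.toDual (⨅ x ∈ S n, LinearMap.ker (Fintype.linearCombination 𝕜 (φ · x))),
      fun _ _ hmn => OrderDual.toDual_le_toDual.2 (biInf_mono (hS hmn))⟩
  have hA : ∀ n c, c ∈ OrderDual.ofDual (A n) ↔ ∀ x ∈ S n, ∑ i, c i * φ i x = 0 := by
    intro n c
    simp [A, Submodule.mem_iInf, Fintype.linearCombination_apply]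
  obtain ⟨N, hN⟩ := IsArtinian.monotone_stabilizes A
  obtain ⟨c, hc0, hc⟩ := h N
  refine ⟨c, hc0, fun x => ?_⟩
  obtain ⟨n, hn⟩ := hcover x
  have hcA : c ∈ OrderDual.ofDual (A (max N n)) := by
    rw [← hN _ (le_max_left _ _)]
    exact (hA N c).2 hc
  exact (hA _ c).1 hcA x (hS (le_max_right _ _) hn)

theorem setIntegral_Icc_mul_testFunction_eq_zero {ι : Type*} (φ : ι → ℝ → ℝ) (i₀ : ι)
    (hcont : ∀ i, Continuous (φ i)) (hodd : ∀ i, i ≠ i₀ → Function.Odd (φ i)) {a : ℝ}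
    (hyp : ∀ ψ : ℝ → ℝ, (∃ K : NNReal, LipschitzWith K ψ) → (∀ t, 1 ≤ ψ t) →
      (∀ i, i ≠ i₀ → ∫ t in Icc (-a) a, φ i t * ψ t = 0) →
      ∫ t in Icc (-a) a, φ i₀ t * ψ t = 0)
    (g : 𝓓((⊤ : Opens ℝ), ℝ)) (hg : ∀ i, i ≠ i₀ → ∫ t in Icc (-a) a, φ i t * g t = 0) :
    ∫ t in Icc (-a) a, φ i₀ t * g t = 0 := by
  have hint : ∀ i, IntegrableOn (fun t => φ i t * g t) (Icc (-a) a) :=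
    fun i => ((hcont i).mul g.continuous).integrableOn_Icc
  have hshift : ∀ i (b : ℝ), ∫ t in Icc (-a) a, φ i t * (g t + b) =
      (∫ t in Icc (-a) a, φ i t * g t) + b * ∫ t in Icc (-a) a, φ i t := by
    intro i b
    simp_rw [mul_add]
    rw [integral_add (hint i) ((hcont i).integrableOn_Icc.mul_const b), integral_mul_const]
    ring
  have hodd_int : ∀ i, i ≠ i₀ → ∫ t in Icc (-a) a, φ i t = 0 :=
    fun i hi => (hodd i hi).setIntegral_Icc_neg_eq_zero a
  have hlast_int : ∫ t in Icc (-a) a, φ i₀ t = 0 := by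
    simpa using hyp (fun _ => 1) ⟨0, LipschitzWith.const 1⟩ (fun _ => le_rfl)
      (fun i hi => by simpa using hodd_int i hi)
  obtain ⟨b, hlip, hge⟩ := g.exists_lipschitzWith_add_const_one_le (by simp)
  have := hyp _ hlip hge fun i hi => by rw [hshift, hodd_int i hi, hg i hi]; ring
  simpa [hshift, hlast_int] using this

theorem exists_ne_zero_sum_mul_eq_zero_on_Ioo {ι : Type*} [Fintype ι] [DecidableEq ι]
    (φ : ι → ℝ → ℝ) (i₀ : ι) (hcont : ∀ i, Continuous (φ i))
    (hodd : ∀ i, i ≠ i₀ → Function.Odd (φ i)) {a : ℝ}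
    (hyp : ∀ ψ : ℝ → ℝ, (∃ K : NNReal, LipschitzWith K ψ) → (∀ t, 1 ≤ ψ t) →
      (∀ i, i ≠ i₀ → ∫ t in Icc (-a) a, φ i t * ψ t = 0) →
      ∫ t in Icc (-a) a, φ i₀ t * ψ t = 0) :
    ∃ c : ι → ℝ, c ≠ 0 ∧ ∀ t ∈ Ioo (-a) a, ∑ i, c i * φ i t = 0 := by
  let L : ι → 𝓓((⊤ : Opens ℝ), ℝ) →ₗ[ℝ] ℝ := fun i =>
    (TestFunction.integralAgainstBilinCLM (ContinuousLinearMap.mul ℝ ℝ)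
      (volume.restrict (Icc (-a) a)) (φ i) : 𝓓((⊤ : Opens ℝ), ℝ) →L[ℝ] ℝ)
  have hL : ∀ i g, L i g = ∫ t in Icc (-a) a, φ i t * g t := fun i g => by
    simp [L, TestFunction.integralAgainstBilinCLM_eq_integral
      ((hcont i).locallyIntegrable.locallyIntegrableOn _), mul_comm]
  obtain ⟨c, hc0, hc⟩ := LinearMap.exists_ne_zero_sum_smul_eq_zero (L := L) i₀ fun g hg => by
    simpa [hL] using setIntegral_Icc_mul_testFunction_eq_zero φ i₀ hcont hodd hyp g
      fun i hi => by simpa [hL] using hg i hi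
  refine ⟨c, hc0, fun t ht => ?_⟩
  refine eqOn_zero_of_setIntegral_testFunction_mul_eq_zero (μ := volume)
    (h := fun t => ∑ i, c i * φ i t) (by fun_prop) (fun g => ?_) (by rwa [interior_Icc])
  have hint : ∀ i, IntegrableOn (fun x => φ i x * g x) (Icc (-a) a) :=
    fun i => ((hcont i).mul g.continuous).integrableOn_Icc
  calc ∫ x in Icc (-a) a, g x * ∑ i, c i * φ i x
      = ∑ i, c i * ∫ x in Icc (-a) a, φ i x * g x := by
        simp_rw [← integral_const_mul]
        rw [← integral_finsetSum _ fun i _ => (hint i).const_mul (c i)]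
        congr 1
        funext x
        rw [Finset.mul_sum]
        exact Finset.sum_congr rfl fun i _ => by ring
    _ = 0 := by simpa [hL] using LinearMap.congr_fun hc g

theorem stmt11_general (M : ℕ) (φ : Fin (M + 1) → ℝ → ℝ)
    (hcont : ∀ i, Continuous (φ i))
    (hodd : ∀ i : Fin (M + 1), i ≠ Fin.last M → ∀ t, φ i (-t) = -(φ i t))
    (hyp : ∀ a : ℝ, 0 < a → ∀ ψ : ℝ → ℝ, (∃ K : NNReal, LipschitzWith K ψ) →
      (∀ t, 1 ≤ ψ t) →
      (∀ i : Fin (M + 1), i ≠ Fin.last M → ∫ t in Icc (-a) a, φ i t * ψ t = 0) →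
      ∫ t in Icc (-a) a, φ (Fin.last M) t * ψ t = 0) :
    ∃ c : Fin (M + 1) → ℝ, c ≠ 0 ∧ ∀ t : ℝ, ∑ i, c i * φ i t = 0 := by
  refine exists_ne_zero_forall_sum_mul_eq_zero_of_monotone φ
    (S := fun n : ℕ => Ioo (-(n + 1 : ℝ)) (n + 1)) (fun m n hmn => ?_) (fun t => ?_)
    fun n => exists_ne_zero_sum_mul_eq_zero_on_Ioo φ _ hcont hodd (hyp _ (by positivity))
  · exact Ioo_subset_Ioo (by gcongr) (by gcongr)
  · refine ⟨⌈|t|⌉₊, ?_⟩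
    rw [mem_Ioo, ← abs_lt]
    linarith [Nat.le_ceil |t|]

theorem stmt11 (M : ℕ) (φ : Fin (M + 1) → ℝ → ℝ)
    (hcont : ∀ i, Continuous (φ i))
    (hodd : ∀ i : Fin (M + 1), i ≠ Fin.last M → ∀ t, φ i (-t) = -(φ i t))
    (C q : ℝ) (hC : 0 < C) (hq : 1 ≤ q)
    (hgrowth : ∀ i, ∀ t : ℝ, |φ i t| ≤ C * (1 + |t| ^ q))
    (hyp : ∀ a : ℝ, 0 < a → ∀ ψ : ℝ → ℝ, (∃ K : NNReal, LipschitzWith K ψ) →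
      (∀ t, 1 ≤ ψ t) →
      (∀ i : Fin (M + 1), i ≠ Fin.last M → ∫ t in Icc (-a) a, φ i t * ψ t = 0) →
      ∫ t in Icc (-a) a, φ (Fin.last M) t * ψ t = 0) :
    ∃ c : Fin (M + 1) → ℝ, c ≠ 0 ∧ ∀ t : ℝ, ∑ i, c i * φ i t = 0 :=
  stmt11_general M φ hcont hodd hyp
end

section
/- Let p ≥ 2 and define Φ : ℝ → ℝ by Φ(t) = p·t for |t| ≤ 1 and Φ(t) = p·|t|^{p-2}t for |t| > 1. Then for all real t, |1+t|^p - 1 - |t|^p ≥ Φ(t). -/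
/-!
Both sides are homogeneous once `1` and `t` are read as two nonnegative magnitudes, so the four
cases (`t ≥ 0` or `t < 0`, `|t| ≤ 1` or `|t| > 1`) reduce to two two-variable inequalities,
`a ^ p + p a ^ (p - 1) b + b ^ p ≤ (a + b) ^ p` and `c ^ p + b ^ p ≤ (c - b) ^ p + p c ^ (p - 1) b`
for `0 ≤ b ≤ c`. Each holds with equality at `b = 0`, and its derivative in `b` is nonnegative by
the superadditivity of `x ↦ x ^ (p - 1)` on `[0, ∞)`, which is where `p ≥ 2` enters.
-/

open Real Set

theorem monotoneOn_of_hasDerivAt_nonneg {f f' : ℝ → ℝ} {s : Set ℝ} (hs : Convex ℝ s)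
    (hf : ∀ x, HasDerivAt f (f' x) x) (hf' : ∀ x ∈ interior s, 0 ≤ f' x) : MonotoneOn f s :=
  monotoneOn_of_hasDerivWithinAt_nonneg hs (fun x _ ↦ (hf x).continuousAt.continuousWithinAt)
    (fun x _ ↦ (hf x).hasDerivWithinAt) hf'

theorem rpow_add_mul_add_rpow_le_add_rpow {p a b : ℝ} (hp : 2 ≤ p) (ha : 0 ≤ a) (hb : 0 ≤ b) :
    a ^ p + p * a ^ (p - 1) * b + b ^ p ≤ (a + b) ^ p := by
  have hp1 : 1 ≤ p := by linarith
  have hf : ∀ x, HasDerivAt (fun x ↦ (a + x) ^ p - p * a ^ (p - 1) * x - x ^ p)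
      (p * (a + x) ^ (p - 1) - p * a ^ (p - 1) - p * x ^ (p - 1)) x := fun x ↦
    (((((hasDerivAt_id x).const_add a).rpow_const (Or.inr hp1)).sub
      ((hasDerivAt_id x).const_mul _)).sub (hasDerivAt_rpow_const (Or.inr hp1))).congr_deriv
      (by simp)
  have hmono : MonotoneOn (fun x ↦ (a + x) ^ p - p * a ^ (p - 1) * x - x ^ p) (Ici 0) := by
    refine monotoneOn_of_hasDerivAt_nonneg (convex_Ici 0) hf fun x hx ↦ ?_
    have hsuper := add_rpow_le_rpow_add ha (interior_subset hx) (by linarith : 1 ≤ p - 1)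
    linarith [mul_le_mul_of_nonneg_left hsuper (by linarith : 0 ≤ p)]
  have := hmono self_mem_Ici hb hb
  simp only [add_zero, mul_zero, zero_rpow (by linarith : p ≠ 0)] at this
  linarith

theorem add_rpow_add_rpow_le_sub_rpow_add_mul {p b c : ℝ} (hp : 2 ≤ p) (hb : 0 ≤ b) (hbc : b ≤ c) :
    c ^ p + b ^ p ≤ (c - b) ^ p + p * c ^ (p - 1) * b := by
  have hp1 : 1 ≤ p := by linarith
  have hf : ∀ x, HasDerivAt (fun x ↦ (c - x) ^ p + p * c ^ (p - 1) * x - x ^ p)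
      (p * c ^ (p - 1) - p * (c - x) ^ (p - 1) - p * x ^ (p - 1)) x := fun x ↦
    (((((hasDerivAt_id x).const_sub c).rpow_const (Or.inr hp1)).add
      ((hasDerivAt_id x).const_mul _)).sub (hasDerivAt_rpow_const (Or.inr hp1))).congr_deriv
      (by simp; ring)
  have hmono : MonotoneOn (fun x ↦ (c - x) ^ p + p * c ^ (p - 1) * x - x ^ p) (Icc 0 c) := by
    refine monotoneOn_of_hasDerivAt_nonneg (convex_Icc 0 c) hf fun x hx ↦ ?_
    obtain ⟨hx0, hxc⟩ := interior_subset hx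
    have hsuper := add_rpow_le_rpow_add (sub_nonneg.2 hxc) hx0 (by linarith : 1 ≤ p - 1)
    rw [sub_add_cancel] at hsuper
    linarith [mul_le_mul_of_nonneg_left hsuper (by linarith : 0 ≤ p)]
  have := hmono (left_mem_Icc.2 (hb.trans hbc)) ⟨hb, hbc⟩ hb
  simp only [sub_zero, mul_zero, add_zero, zero_rpow (by linarith : p ≠ 0)] at this
  linarith

theorem stmt15 (p : ℝ) (hp : 2 ≤ p) (t : ℝ) :
    |1 + t| ^ p - 1 - |t| ^ p ≥
      if |t| ≤ 1 then p * t else p * (Real.sign t * |t| ^ (p - 1)) := by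
  rcases le_or_gt 0 t with ht | ht
  · rw [abs_of_nonneg ht, abs_of_nonneg (by linarith : 0 ≤ 1 + t)]
    split_ifs with h
    · have := rpow_add_mul_add_rpow_le_add_rpow hp zero_le_one ht
      simp only [one_rpow, mul_one] at this
      linarith
    · have := rpow_add_mul_add_rpow_le_add_rpow hp ht zero_le_one
      rw [sign_of_pos (by linarith)]
      rw [one_rpow, add_comm t] at this
      linarith
  · rw [abs_of_neg ht]
    split_ifs with h
    · have := add_rpow_add_rpow_le_sub_rpow_add_mul hp (neg_nonneg.2 ht.le) h
      rw [abs_of_nonneg (by linarith : 0 ≤ 1 + t)]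
      rw [one_rpow, one_rpow, mul_one, sub_neg_eq_add] at this
      linarith
    · have := add_rpow_add_rpow_le_sub_rpow_add_mul hp zero_le_one (not_le.1 h).le
      rw [abs_of_neg (by linarith : 1 + t < 0), sign_of_neg ht]
      rw [one_rpow, mul_one, show -t - 1 = -(1 + t) by ring] at this
      linarith
end
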